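/- arXiv:1905.03074 — 8 statements merged into one kernel-verified Lean document; each statement's English description precedes it below -/
import Mathlib

section
/- Let k be a field of characteristic p, where p is an odd prime. Let A be the quotient of the free associative k-algebra on generators x_1, x_2 by the two-sided ideal generated by the three elements x_2·x_1 − x_1·x_2 + (1/2)·x_1^2, x_1^p, and x_2^p (the Jordan plane in characteristic p). Then the images of the monomials x_1^a·x_2^b with 0 ≤ a, b ≤ p−1 form a k-basis of A; in particular dim_k A = p^2. -/
noncomputable section

/-- The first generator of the free algebra on two generators. -/
def jX1 (k : Type*) [Field k] : FreeAlgebra k (Fin 2) := FreeAlgebra.ι k 0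

/-- The second generator of the free algebra on two generators. -/
def jX2 (k : Type*) [Field k] : FreeAlgebra k (Fin 2) := FreeAlgebra.ι k 1

/-- The relation whose `RingQuot` is the quotient by the two-sided ideal generated by
`x₂x₁ - x₁x₂ + (1/2)x₁²`, `x₁ᵖ` and `x₂ᵖ` (the Jordan plane in characteristic `p`). -/
def jordanRel (k : Type*) [Field k] (p : ℕ) :
    FreeAlgebra k (Fin 2) → FreeAlgebra k (Fin 2) → Prop := fun a b =>
  b = 0 ∧
    (a = jX2 k * jX1 k - jX1 k * jX2 k + (2⁻¹ : k) • (jX1 k ^ 2) ∨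
     a = jX1 k ^ p ∨ a = jX2 k ^ p)

/-- The image of the monomial `x₁^a x₂^b` in the Jordan plane. -/
def jordanMono (k : Type*) [Field k] (p : ℕ) (m : Fin p × Fin p) :
    RingQuot (jordanRel k p) :=
  RingQuot.mkAlgHom k (jordanRel k p) (jX1 k ^ (m.1 : ℕ) * jX2 k ^ (m.2 : ℕ))

/-!
The monomials `x₁ᵃ x₂ᵇ` span: the relation `x₂ x₁ᵃ = x₁ᵃ x₂ - (a/2) x₁ᵃ⁺¹` shows that their span
is stable under left multiplication by the generators, and `x₁ᵖ = x₂ᵖ = 0` discards the exponents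
`≥ p`. For independence we write down the expected left regular representation on the space with
basis `e_{a,b}`, `0 ≤ a, b < p`: `x₁ e_{a,b} = e_{a+1,b}` and
`x₂ e_{a,b} = e_{a,b+1} - (a/2) e_{a+1,b}`, i.e. `x₁ ↦ s` and `x₂ ↦ t - ½ s² ∂ₛ` on
`k[s,t]/(sᵖ,tᵖ)`. The two summands of the image of `x₂` commute and are nilpotent of order `p`, so
in characteristic `p` its `p`-th power vanishes. Then `x₁ᵃ x₂ᵇ` sends `e_{0,0}` to `e_{a,b}`.
-/

namespace JordanPlane

section Quotient

variable {k : Type*} [Field k] {p : ℕ}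

local notation "x₁" => RingQuot.mkAlgHom k (jordanRel k p) (jX1 k)
local notation "x₂" => RingQuot.mkAlgHom k (jordanRel k p) (jX2 k)

theorem mkAlgHom_eq_zero_of_rel {a : FreeAlgebra k (Fin 2)} (h : jordanRel k p a 0) :
    RingQuot.mkAlgHom k (jordanRel k p) a = 0 := by
  rw [RingQuot.mkAlgHom_rel k h, map_zero]

theorem x₁_pow_p : x₁ ^ p = 0 := by
  rw [← map_pow]
  exact mkAlgHom_eq_zero_of_rel ⟨rfl, Or.inr (Or.inl rfl)⟩

theorem x₂_pow_p : x₂ ^ p = 0 := by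
  rw [← map_pow]
  exact mkAlgHom_eq_zero_of_rel ⟨rfl, Or.inr (Or.inr rfl)⟩

theorem x₂_mul_x₁ : x₂ * x₁ = x₁ * x₂ - (2⁻¹ : k) • x₁ ^ 2 := by
  have h := mkAlgHom_eq_zero_of_rel (k := k) (p := p) ⟨rfl, Or.inl rfl⟩
  rw [map_add, map_sub, map_mul, map_mul, map_smul, map_pow] at h
  refine eq_sub_of_add_eq (sub_eq_zero.1 ?_)
  rw [← h]
  abel

theorem x₂_mul_x₁_pow (a : ℕ) :
    x₂ * x₁ ^ a = x₁ ^ a * x₂ - ((a : k) * 2⁻¹) • x₁ ^ (a + 1) := by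
  induction a with
  | zero => simp
  | succ a ih =>
    calc x₂ * x₁ ^ (a + 1) = (x₂ * x₁ ^ a) * x₁ := by rw [pow_succ, mul_assoc]
      _ = x₁ ^ a * (x₂ * x₁) - ((a : k) * 2⁻¹) • x₁ ^ (a + 2) := by
        rw [ih, sub_mul, smul_mul_assoc, mul_assoc, ← pow_succ]
      _ = x₁ ^ (a + 1) * x₂ - (((a + 1 : ℕ) : k) * 2⁻¹) • x₁ ^ (a + 2) := by
        rw [x₂_mul_x₁, mul_sub, mul_smul_comm, ← mul_assoc, ← pow_succ, ← pow_add]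
        push_cast
        module

theorem span_monomials_eq_top :
    Submodule.span k (Set.range fun ab : ℕ × ℕ => x₁ ^ ab.1 * x₂ ^ ab.2) = ⊤ := by
  set M := Submodule.span k (Set.range fun ab : ℕ × ℕ => x₁ ^ ab.1 * x₂ ^ ab.2)
  have mem (a b : ℕ) : x₁ ^ a * x₂ ^ b ∈ M := Submodule.subset_span ⟨(a, b), rfl⟩
  have hx₁ : M ≤ M.comap (LinearMap.mulLeft k x₁) := by
    refine Submodule.span_le.2 ?_
    rintro _ ⟨⟨a, b⟩, rfl⟩
    change x₁ * (x₁ ^ a * x₂ ^ b) ∈ M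
    rw [← mul_assoc, ← pow_succ']
    exact mem _ _
  have hx₂ : M ≤ M.comap (LinearMap.mulLeft k x₂) := by
    refine Submodule.span_le.2 ?_
    rintro _ ⟨⟨a, b⟩, rfl⟩
    change x₂ * (x₁ ^ a * x₂ ^ b) ∈ M
    rw [← mul_assoc, x₂_mul_x₁_pow, sub_mul, smul_mul_assoc, mul_assoc, ← pow_succ']
    exact M.sub_mem (mem _ _) (M.smul_mem _ (mem _ _))
  have hmul (w : FreeAlgebra k (Fin 2)) :
      ∀ s ∈ M, RingQuot.mkAlgHom k (jordanRel k p) w * s ∈ M := by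
    induction w using FreeAlgebra.induction with
    | grade0 r => simpa [Algebra.smul_def] using fun s hs => M.smul_mem r hs
    | grade1 i =>
      fin_cases i
      exacts [fun s hs => hx₁ hs, fun s hs => hx₂ hs]
    | mul a b ha hb => simpa [mul_assoc] using fun s hs => ha _ (hb s hs)
    | add a b ha hb => simpa [add_mul] using fun s hs => M.add_mem (ha s hs) (hb s hs)
  refine Submodule.eq_top_iff'.2 fun z => ?_
  obtain ⟨w, rfl⟩ := RingQuot.mkAlgHom_surjective k (jordanRel k p) z
  simpa using hmul w 1 (by simpa using mem 0 0)

theorem span_jordanMono : Submodule.span k (Set.range (jordanMono k p)) = ⊤ := by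
  refine eq_top_iff.2 (span_monomials_eq_top.ge.trans (Submodule.span_le.2 ?_))
  rintro _ ⟨⟨a, b⟩, rfl⟩
  by_cases ha : a < p
  · by_cases hb : b < p
    · exact Submodule.subset_span ⟨(⟨a, ha⟩, ⟨b, hb⟩), by simp [jordanMono]⟩
    · obtain ⟨b, rfl⟩ := Nat.exists_eq_add_of_le (not_lt.1 hb)
      simp [pow_add, x₂_pow_p]
  · obtain ⟨a, rfl⟩ := Nat.exists_eq_add_of_le (not_lt.1 ha)
    simp [pow_add, x₁_pow_p]

end Quotient

section Representation

variable {k : Type*} [Field k] {p : ℕ}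

local notation "V" => Fin p × Fin p →₀ k

def truncSingle (p : ℕ) (a b : ℕ) : Fin p × Fin p →₀ k :=
  if h : a < p ∧ b < p then Finsupp.single (⟨a, h.1⟩, ⟨b, h.2⟩) 1 else 0

theorem truncSingle_of_le {a b : ℕ} (h : p ≤ a ∨ p ≤ b) : truncSingle (k := k) p a b = 0 :=
  dif_neg (by omega)

theorem truncSingle_fin (m : Fin p × Fin p) :
    truncSingle (k := k) p m.1 m.2 = Finsupp.single m 1 := by
  simp [truncSingle]

theorem End.ext_truncSingle {f g : Module.End k V}
    (h : ∀ a b, f (truncSingle p a b) = g (truncSingle p a b)) : f = g := by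
  ext m : 2
  simpa [truncSingle_fin] using h m.1 m.2

def boxOp (v : ℕ → ℕ → V) : Module.End k V :=
  Finsupp.linearCombination k fun m => v m.1 m.2

theorem boxOp_truncSingle {v : ℕ → ℕ → V} (hv : ∀ a b, p ≤ a ∨ p ≤ b → v a b = 0) (a b : ℕ) :
    boxOp v (truncSingle p a b) = v a b := by
  unfold truncSingle
  split_ifs with h
  · simp [boxOp]
  · rw [map_zero, hv a b (by omega)]

theorem pow_apply_truncSingle {T : Module.End k V} {da db : ℕ}
    (hT : ∀ a b, ∃ c : k, T (truncSingle p a b) = c • truncSingle p (a + da) (b + db))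
    (n a b : ℕ) :
    ∃ c : k, (T ^ n) (truncSingle p a b) = c • truncSingle p (a + n * da) (b + n * db) := by
  induction n with
  | zero => exact ⟨1, by simp⟩
  | succ n ih =>
    obtain ⟨c, hc⟩ := ih
    obtain ⟨c', hc'⟩ := hT (a + n * da) (b + n * db)
    refine ⟨c * c', ?_⟩
    rw [pow_succ', Module.End.mul_apply, hc, map_smul, hc', smul_smul, Nat.succ_mul,
      Nat.succ_mul, add_assoc, add_assoc]

theorem pow_eq_zero_of_shift {T : Module.End k V} {da db : ℕ} (hd : 0 < da + db)
    (hT : ∀ a b, ∃ c : k, T (truncSingle p a b) = c • truncSingle p (a + da) (b + db)) :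
    T ^ p = 0 := by
  refine End.ext_truncSingle fun a b => ?_
  obtain ⟨c, hc⟩ := pow_apply_truncSingle hT p a b
  have hout : p ≤ a + p * da ∨ p ≤ b + p * db := by
    rcases Nat.eq_zero_or_pos da with rfl | hda
    · exact Or.inr (by nlinarith)
    · exact Or.inl (by nlinarith)
  rw [hc, truncSingle_of_le hout, smul_zero, LinearMap.zero_apply]

def mulS : Module.End k V := boxOp fun a b => truncSingle p (a + 1) b

def mulT : Module.End k V := boxOp fun a b => truncSingle p a (b + 1)

def jordanDeriv : Module.End k V := boxOp fun a b => -((a : k) * 2⁻¹) • truncSingle p (a + 1) b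

def jordanY : Module.End k V := mulT + jordanDeriv

@[simp]
theorem mulS_truncSingle (a b : ℕ) :
    mulS (truncSingle p a b) = truncSingle (k := k) p (a + 1) b :=
  boxOp_truncSingle (fun _ _ h => truncSingle_of_le (by omega)) a b

@[simp]
theorem mulT_truncSingle (a b : ℕ) :
    mulT (truncSingle p a b) = truncSingle (k := k) p a (b + 1) :=
  boxOp_truncSingle (fun _ _ h => truncSingle_of_le (by omega)) a b

@[simp]
theorem jordanDeriv_truncSingle (a b : ℕ) :
    jordanDeriv (truncSingle p a b) = -((a : k) * 2⁻¹) • truncSingle (k := k) p (a + 1) b :=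
  boxOp_truncSingle (fun _ _ h => by rw [truncSingle_of_le (by omega), smul_zero]) a b

theorem mulS_pow_p : (mulS : Module.End k V) ^ p = 0 :=
  pow_eq_zero_of_shift (da := 1) (db := 0) one_pos fun a b => ⟨1, by simp⟩

theorem mulT_pow_p : (mulT : Module.End k V) ^ p = 0 :=
  pow_eq_zero_of_shift (da := 0) (db := 1) one_pos fun a b => ⟨1, by simp⟩

theorem jordanDeriv_pow_p : (jordanDeriv : Module.End k V) ^ p = 0 :=
  pow_eq_zero_of_shift (da := 1) (db := 0) one_pos fun a b => ⟨_, jordanDeriv_truncSingle a b⟩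

theorem commute_mulT_jordanDeriv : Commute (mulT : Module.End k V) jordanDeriv :=
  End.ext_truncSingle fun a b => by simp

theorem jordanY_pow_p (hp : p.Prime) [CharP k p] : (jordanY : Module.End k V) ^ p = 0 := by
  have : Fact p.Prime := ⟨hp⟩
  have : NeZero p := ⟨hp.ne_zero⟩
  have : CharP (Module.End k V) p := charP_of_injective_algebraMap' k p
  rw [jordanY, add_pow_char_of_commute (p := p) commute_mulT_jordanDeriv, mulT_pow_p,
    jordanDeriv_pow_p, add_zero]

theorem jordanY_mul_mulS :
    jordanY * mulS - mulS * jordanY + (2⁻¹ : k) • mulS ^ 2 = (0 : Module.End k V) := by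
  refine End.ext_truncSingle fun a b => ?_
  simp [jordanY, pow_two]
  module

theorem mulS_pow_truncSingle (a b : ℕ) :
    (mulS ^ a) (truncSingle p 0 b) = truncSingle (k := k) p a b := by
  induction a with
  | zero => simp
  | succ a ih => rw [pow_succ', Module.End.mul_apply, ih, mulS_truncSingle]

theorem jordanY_pow_truncSingle (b : ℕ) :
    (jordanY ^ b) (truncSingle p 0 0) = truncSingle (k := k) p 0 b := by
  induction b with
  | zero => simp
  | succ b ih =>
    rw [pow_succ', Module.End.mul_apply, ih, jordanY, LinearMap.add_apply, mulT_truncSingle,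
      jordanDeriv_truncSingle, Nat.cast_zero, zero_mul, neg_zero, zero_smul, add_zero]

def freeRep : FreeAlgebra k (Fin 2) →ₐ[k] Module.End k V := FreeAlgebra.lift k ![mulS, jordanY]

@[simp]
theorem freeRep_jX1 : freeRep (jX1 k) = (mulS : Module.End k V) :=
  FreeAlgebra.lift_ι_apply _ _

@[simp]
theorem freeRep_jX2 : freeRep (jX2 k) = (jordanY : Module.End k V) :=
  FreeAlgebra.lift_ι_apply _ _

theorem freeRep_rel (hp : p.Prime) [CharP k p] ⦃a b : FreeAlgebra k (Fin 2)⦄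
    (h : jordanRel k p a b) : freeRep a = (freeRep b : Module.End k V) := by
  obtain ⟨rfl, rfl | rfl | rfl⟩ := h
  · simpa [pow_two] using jordanY_mul_mulS
  · simpa using mulS_pow_p
  · simpa using jordanY_pow_p hp

theorem freeRep_monomial_apply (a b : ℕ) :
    freeRep (jX1 k ^ a * jX2 k ^ b) (truncSingle p 0 0) = truncSingle (k := k) p a b := by
  simp [jordanY_pow_truncSingle, mulS_pow_truncSingle]

theorem linearIndependent_jordanMono (hp : p.Prime) [CharP k p] :
    LinearIndependent k (jordanMono k p) := by
  let rep := RingQuot.liftAlgHom k ⟨freeRep, freeRep_rel hp⟩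
  let evalBase := LinearMap.applyₗ (truncSingle p 0 0) ∘ₗ rep.toLinearMap
  have : evalBase ∘ jordanMono k p = fun m => Finsupp.single m 1 := by
    ext1 m
    change rep (jordanMono k p m) (truncSingle p 0 0) = _
    rw [jordanMono, RingQuot.liftAlgHom_mkAlgHom_apply, ← truncSingle_fin]
    exact freeRep_monomial_apply _ _
  exact LinearIndependent.of_comp evalBase (this ▸ Finsupp.linearIndependent_single_one k _)

end Representation

end JordanPlane

theorem stmt_1_general (k : Type*) [Field k] (p : ℕ) (hp : p.Prime) [CharP k p] :
    LinearIndependent k (jordanMono k p) ∧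
      Submodule.span k (Set.range (jordanMono k p)) = ⊤ ∧
      Module.finrank k (RingQuot (jordanRel k p)) = p ^ 2 := by
  have hli := JordanPlane.linearIndependent_jordanMono (k := k) hp
  have hspan := JordanPlane.span_jordanMono (k := k) (p := p)
  refine ⟨hli, hspan, ?_⟩
  rw [Module.finrank_eq_card_basis (Module.Basis.mk hli hspan.ge), Fintype.card_prod,
    Fintype.card_fin, sq]

theorem stmt_1 (k : Type*) [Field k] (p : ℕ) (hp : p.Prime) (hodd : Odd p) [CharP k p] :
    LinearIndependent k (jordanMono k p) ∧
      Submodule.span k (Set.range (jordanMono k p)) = ⊤ ∧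
      Module.finrank k (RingQuot (jordanRel k p)) = p ^ 2 :=
  stmt_1_general k p hp
end
end

section
/- Let R be an associative (not necessarily commutative) ring and let a, b ∈ R satisfy b·a = a·(a + b). Then for every natural number n ≥ 1, (b − a)^n = b^n − n·a·b^{n−1}. -/
theorem stmt_3 (R : Type*) [Ring R] (a b : R) (h : b * a = a * (a + b)) :
    ∀ n : ℕ, 1 ≤ n → (b - a) ^ n = b ^ n - n • (a * b ^ (n - 1)) := by
  have key : ∀ n : ℕ, (b - a) ^ (n + 1) = b ^ (n + 1) - (n + 1) • (a * b ^ n) := by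
    intro n
    induction n with
    | zero => simp
    | succ k ih =>
      have h2 : b * (a * b ^ k) = a * (a * b ^ k) + a * b ^ (k + 1) := by
        have := congrArg (· * b ^ k) h
        simpa [mul_assoc, mul_add, add_mul, pow_succ'] using this
      calc (b - a) ^ (k + 1 + 1) = (b - a) * (b - a) ^ (k + 1) := by rw [← pow_succ']
        _ = (b - a) * (b ^ (k + 1) - (k + 1) • (a * b ^ k)) := by rw [ih]
        _ = b ^ (k + 2) - (k + 2) • (a * b ^ (k + 1)) := by
            rw [mul_sub, sub_mul, mul_smul_comm, sub_mul, h2, add_sub_cancel_left,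
              show (k + 2) • (a * b ^ (k + 1)) = (k + 1) • (a * b ^ (k + 1)) + a * b ^ (k + 1)
                from succ_nsmul _ (k + 1), ← pow_succ', sub_sub, add_comm (a * b ^ (k + 1))]
  intro n hn
  obtain ⟨m, rfl⟩ := Nat.exists_eq_add_of_le hn
  rw [add_comm 1 m]
  simpa using key m
end

section
/- Let R be an associative (not necessarily commutative) ring and let a, b ∈ R satisfy b·a = a·(a + b). Then for every natural number n ≥ 1, the sum ∑_{i=1}^{n} (b + a)^{i−1}·(b − a)^{n−i} equals n·b^{n−1}. -/
private lemma aux_pow (R : Type*) [Ring R] (a b : R) (h : b * a = a * (a + b)) :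
    ∀ n : ℕ, (b - a) ^ (n + 1) = b ^ (n + 1) - (n + 1) • (a * b ^ n) := by
  have key : b * a = a * a + a * b := by rw [h, mul_add]
  intro n
  induction n with
  | zero => simp
  | succ n ih =>
    calc (b - a) ^ (n + 2) = (b - a) * (b - a) ^ (n + 1) := by rw [pow_succ']
    _ = (b - a) * (b ^ (n + 1) - (n + 1) • (a * b ^ n)) := by rw [ih]
    _ = b * b ^ (n + 1) - (n + 1) • (b * a * b ^ n)
        - (a * b ^ (n + 1) - (n + 1) • (a * a * b ^ n)) := by
      rw [sub_mul, mul_sub, mul_sub, mul_smul_comm, mul_smul_comm, mul_assoc, mul_assoc]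
    _ = b ^ (n + 2) - (n + 2) • (a * b ^ (n + 1)) := by
      rw [key, add_mul, smul_add, mul_assoc a b (b ^ n), ← pow_succ' b n,
        ← pow_succ' b (n + 1)]
      have h2 : b ^ (n + 1 + 1) = b ^ (n + 2) := rfl
      have h3 : (n + 2) • (a * b ^ (n + 1))
          = (n + 1) • (a * b ^ (n + 1)) + a * b ^ (n + 1) := succ_nsmul _ (n + 1)
      rw [h2, h3]
      abel

private lemma aux_sum (R : Type*) [Ring R] (a b : R) (h : b * a = a * (a + b)) :
    ∀ n : ℕ, ∑ j ∈ Finset.range (n + 1), (b + a) ^ j * (b - a) ^ (n - j)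
      = (n + 1) • b ^ n := by
  intro n
  induction n with
  | zero => simp
  | succ n ih =>
    rw [Finset.sum_range_succ']
    have e1 : ∀ i ∈ Finset.range (n + 1),
        (b + a) ^ (i + 1) * (b - a) ^ (n + 1 - (i + 1))
          = (b + a) * ((b + a) ^ i * (b - a) ^ (n - i)) := by
      intro i hi
      have : n + 1 - (i + 1) = n - i := by omega
      rw [this, pow_succ', mul_assoc]
    rw [Finset.sum_congr rfl e1, ← Finset.mul_sum, ih]
    simp only [Nat.sub_zero, pow_zero, one_mul]
    rw [aux_pow R a b h n, mul_smul_comm, add_mul, smul_add]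
    have hb : b * b ^ n = b ^ (n + 1) := (pow_succ' b n).symm
    rw [hb, succ_nsmul (b ^ (n + 1)) (n + 1)]
    abel

theorem stmt_4 (R : Type*) [Ring R] (a b : R) (h : b * a = a * (a + b)) :
    ∀ n : ℕ, 1 ≤ n →
      ∑ i ∈ Finset.Icc 1 n, (b + a) ^ (i - 1) * (b - a) ^ (n - i) = n • b ^ (n - 1) := by
  intro n hn
  obtain ⟨m, rfl⟩ : ∃ m, n = m + 1 := ⟨n - 1, by omega⟩
  rw [← Finset.Ico_add_one_right_eq_Icc, Finset.sum_Ico_eq_sum_range]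
  have e : ∀ i ∈ Finset.range (m + 1 + 1 - 1),
      (b + a) ^ (1 + i - 1) * (b - a) ^ (m + 1 - (1 + i))
        = (b + a) ^ i * (b - a) ^ (m - i) := by
    intro i hi
    have h1 : 1 + i - 1 = i := by omega
    have h2 : m + 1 - (1 + i) = m - i := by omega
    rw [h1, h2]
  rw [Finset.sum_congr rfl e]
  have : Finset.range (m + 1 + 1 - 1) = Finset.range (m + 1) := rfl
  rw [this, aux_sum R a b h m]
  simp
end

section
/- Let k be a field and A an associative k-algebra containing elements x_1, x_2 such that x_1^2 = 0 and x_2·x_21 − x_21·x_2 − x_1·x_21 = 0, where x_21 := x_2·x_1 + x_1·x_2. Then x_21·x_1 = x_1·x_21, and for every natural number n, x_21^n·x_2 = (x_2 − n·x_1)·x_21^n. -/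
theorem stmt_5 (k : Type*) [Field k] (A : Type*) [Ring A] [Algebra k A]
    (x1 x2 : A) (h1 : x1 ^ 2 = 0)
    (h2 : x2 * (x2 * x1 + x1 * x2) - (x2 * x1 + x1 * x2) * x2
        - x1 * (x2 * x1 + x1 * x2) = 0) :
    (x2 * x1 + x1 * x2) * x1 = x1 * (x2 * x1 + x1 * x2) ∧
      ∀ n : ℕ, (x2 * x1 + x1 * x2) ^ n * x2
        = (x2 - n • x1) * (x2 * x1 + x1 * x2) ^ n := by
  set y := x2 * x1 + x1 * x2 with hy
  have h0 : x1 * x1 = 0 := by rw [← pow_two]; exact h1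
  have hc : y * x1 = x1 * y := by
    rw [hy, add_mul, mul_add, mul_assoc, mul_assoc, h0, ← mul_assoc x1 x1 x2, h0]
    simp
  have hyx : y * x2 = x2 * y - x1 * y := by
    rw [sub_sub, sub_eq_zero] at h2
    rw [h2]; abel
  have hcn : ∀ n : ℕ, y ^ n * x1 = x1 * y ^ n := by
    intro n
    induction n with
    | zero => simp
    | succ n ih => rw [pow_succ, mul_assoc, hc, ← mul_assoc, ih, mul_assoc]
  refine ⟨hc, fun n => ?_⟩
  induction n with
  | zero => simp
  | succ n ih =>
    rw [pow_succ, mul_assoc, hyx, mul_sub, ← mul_assoc, ← mul_assoc, ih, hcn,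
      succ_nsmul, mul_assoc, mul_assoc, ← pow_succ]
    rw [sub_mul, sub_mul, add_mul, sub_sub]
end

section
/- Let p be an odd prime, k a field of characteristic p, and let 𝔞 be an integer with 1−p ≤ 𝔞 ≤ −1. Let a ∈ k be an element with 2a equal to the image of 𝔞 in k. Define a sequence (μ_n) in k by μ_0 = 1, and μ_{n+1} = (2a + n)·μ_n if n is odd, μ_{n+1} = −((2a + n)/2)·μ_n if n is even (where integers are interpreted via the canonical ring map ℤ → k, and /2 is division by 2 in k). Then for every natural number n, μ_n = 0 if and only if n > −𝔞. -/
theorem stmt_6 (p : ℕ) (hp : p.Prime) (hodd : Odd p) (k : Type*) [Field k] [CharP k p]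
    (𝔞 : ℤ) (h𝔞1 : 1 - (p : ℤ) ≤ 𝔞) (h𝔞2 : 𝔞 ≤ -1)
    (a : k) (ha : 2 * a = (𝔞 : k))
    (μ : ℕ → k) (hμ0 : μ 0 = 1)
    (hμ : ∀ n : ℕ, μ (n + 1) =
      if Odd n then (2 * a + (n : k)) * μ n else -((2 * a + (n : k)) / 2) * μ n) :
    ∀ n : ℕ, μ n = 0 ↔ (n : ℤ) > -𝔞 := by
  have hp0 : (0:ℤ) < p := by exact_mod_cast hp.pos
  have hp2 : p ≠ 2 := by
    intro h; rw [h] at hodd; exact (by decide : ¬ Odd 2) hodd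
  have h2 : (2 : k) ≠ 0 := by
    rw [Ne, show (2:k) = ((2:ℕ):k) by norm_num, CharP.cast_eq_zero_iff k p]
    intro hdvd
    exact hp2 ((Nat.prime_dvd_prime_iff_eq hp Nat.prime_two).mp hdvd)
  -- nonvanishing of factors below -𝔞
  have hfac : ∀ n : ℕ, (n : ℤ) < -𝔞 → (2 * a + (n : k)) ≠ 0 := by
    intro n hn
    have : ((𝔞 + n : ℤ) : k) ≠ 0 := by
      rw [Ne, CharP.intCast_eq_zero_iff k p]
      rintro ⟨c, hc⟩
      have h1 : 1 - (p:ℤ) ≤ 𝔞 + n := by omega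
      have h2' : 𝔞 + n ≤ -1 := by omega
      have hc1 : c ≤ -1 := by nlinarith
      nlinarith
    intro h0
    apply this
    push_cast
    rw [← ha]
    linear_combination h0
  have key : ∀ n : ℕ, (n : ℤ) ≤ -𝔞 → μ n ≠ 0 := by
    intro n
    induction n with
    | zero => intro _; rw [hμ0]; exact one_ne_zero
    | succ n ih =>
      intro h
      have hn : (n : ℤ) < -𝔞 := by push_cast at h; omega
      have hμn := ih (le_of_lt hn)
      have hf := hfac n hn
      rw [hμ n]
      split
      · exact mul_ne_zero hf hμn
      · exact mul_ne_zero (neg_ne_zero.mpr (div_ne_zero hf h2)) hμn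
  set m : ℕ := (-𝔞).toNat with hm
  have hmz : (m : ℤ) = -𝔞 := Int.toNat_of_nonneg (by omega)
  have hzero : ∀ n : ℕ, m < n → μ n = 0 := by
    intro n
    induction n with
    | zero => omega
    | succ n ih =>
      intro h
      rcases Nat.lt_or_ge m n with h' | h'
      · rw [hμ n, ih h']
        split <;> ring
      · have hn : (n : ℤ) = -𝔞 := by omega
        have hcast : (2 * a + (n : k)) = 0 := by
          rw [ha, show ((n:ℕ):k) = (((n:ℕ):ℤ):k) by push_cast; ring, hn]
          push_cast; ring
        rw [hμ n, hcast]
        split <;> ring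
  intro n
  constructor
  · intro h0
    by_contra hgt
    exact key n (by omega) h0
  · intro hgt
    apply hzero
    omega
end

section
/- Let p be an odd prime, k a field of characteristic p, and let 𝔞 be an even integer with 1 ≤ 𝔞 ≤ 2p−1. Let a ∈ k be an element with 2a equal to the image of 𝔞 in k. Define a sequence (μ_n) in k by μ_0 = 1, and μ_{n+1} = μ_n if n is odd, μ_{n+1} = −(a − n/2)·μ_n if n is even (where integers are interpreted via the canonical ring map ℤ → k, and /2 is division by 2 in k). Then for every natural number n, μ_n = 0 if and only if n > 𝔞. -/
theorem stmt_7 (p : ℕ) (hp : p.Prime) (hodd : Odd p) (k : Type*) [Field k] [CharP k p]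
    (𝔞 : ℤ) (h𝔞even : Even 𝔞) (h𝔞1 : 1 ≤ 𝔞) (h𝔞2 : 𝔞 ≤ 2 * (p : ℤ) - 1)
    (a : k) (ha : 2 * a = (𝔞 : k))
    (μ : ℕ → k) (hμ0 : μ 0 = 1)
    (hμ : ∀ n : ℕ, μ (n + 1) =
      if Odd n then μ n else -(a - (n : k) / 2) * μ n) :
    ∀ n : ℕ, μ n = 0 ↔ (n : ℤ) > 𝔞 := by
  obtain ⟨m, hm⟩ := h𝔞even
  have hpodd : p % 2 = 1 := Nat.odd_iff.mp hodd
  have hp3 : 3 ≤ p := by have := hp.two_le; omega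
  have hp3' : (3 : ℤ) ≤ (p : ℤ) := by exact_mod_cast hp3
  have h2k : (2 : k) ≠ 0 := by
    have hnd : ¬ (p : ℤ) ∣ 2 := fun h => by
      have := Int.le_of_dvd (by norm_num) h; omega
    intro h
    exact hnd ((CharP.intCast_eq_zero_iff k p 2).mp (by exact_mod_cast h))
  have key : ∀ n : ℕ, (a - (n : k) / 2 = 0) ↔ (p : ℤ) ∣ (𝔞 - n) := by
    intro n
    have h2 : (2 : k) * (a - (n : k) / 2) = ((𝔞 - n : ℤ) : k) := by
      push_cast
      field_simp
      linear_combination ha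
    constructor
    · intro h
      rw [← CharP.intCast_eq_zero_iff k p, ← h2, h, mul_zero]
    · intro h
      have := (CharP.intCast_eq_zero_iff k p _).mpr h
      rw [← h2] at this
      exact (mul_eq_zero.mp this).resolve_left h2k
  intro n
  induction n with
  | zero =>
    simp only [hμ0, Nat.cast_zero]
    constructor
    · intro h; exact absurd h one_ne_zero
    · intro h; omega
  | succ n ih =>
    rcases Nat.even_or_odd n with he | ho
    · -- n even
      have hno : ¬ Odd n := Nat.not_odd_iff_even.mpr he
      obtain ⟨r, hr⟩ := he
      have hnr : (n : ℤ) = (r : ℤ) + (r : ℤ) := by exact_mod_cast hr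
      rw [hμ n, if_neg hno, neg_mul, neg_eq_zero, mul_eq_zero, key n, ih]
      constructor
      · rintro (⟨c, hc⟩ | h)
        · -- p ∣ 𝔞 - n : show n + 1 > 𝔞
          by_contra hcon
          push_neg at hcon
          have hlt : (n : ℤ) < 𝔞 := by omega
          have hev : Even ((p : ℤ) * c) := ⟨m - r, by omega⟩
          have hcev : Even c := by
            rcases Int.even_mul.mp hev with hh | hh
            · exfalso; rcases hh with ⟨t, ht⟩; omega
            · exact hh
          obtain ⟨d, hd⟩ := hcev
          subst hd
          have hpos : 0 < (p : ℤ) * (d + d) := by omega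
          have hd1 : 1 ≤ d := by nlinarith
          have hn0 : (0 : ℤ) ≤ (n : ℤ) := Int.natCast_nonneg n
          nlinarith
        · omega
      · intro h
        have hcases : (n : ℤ) = 𝔞 ∨ (n : ℤ) > 𝔞 := by omega
        rcases hcases with heq | hgt
        · left; rw [heq]; simp
        · right; exact hgt
    · -- n odd
      rw [hμ n, if_pos ho, ih]
      obtain ⟨j, hj⟩ := ho
      have hnj : (n : ℤ) = 2 * (j : ℤ) + 1 := by exact_mod_cast hj
      omega
end

section
/- Let k be a field of characteristic different from 2, q ∈ k^×, and let A be an associative k-algebra containing elements x_1, x_2, x_3 satisfying x_2·x_1 − x_1·x_2 + (1/2)·x_1^2 = 0 and x_1·x_3 = q·x_3·x_1. Define recursively z_0 := x_3 and z_{n+1} := x_2·z_n − q·z_n·x_2. Then x_1·z_n = q·z_n·x_1 for every natural number n. -/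
theorem stmt_8 (k : Type*) [Field k] (hchar : (2 : k) ≠ 0) (q : k) (hq : q ≠ 0)
    (A : Type*) [Ring A] [Algebra k A] (x1 x2 x3 : A)
    (hJ : x2 * x1 - x1 * x2 + (2⁻¹ : k) • (x1 ^ 2) = 0)
    (h13 : x1 * x3 = q • (x3 * x1))
    (z : ℕ → A) (hz0 : z 0 = x3)
    (hz : ∀ n : ℕ, z (n + 1) = x2 * z n - q • (z n * x2)) :
    ∀ n : ℕ, x1 * z n = q • (z n * x1) := by
  have hx21 : x2 * x1 = x1 * x2 - (2⁻¹ : k) • (x1 ^ 2) := by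
    rw [eq_sub_iff_add_eq, ← sub_eq_zero, ← hJ]; abel
  intro n
  induction n with
  | zero => rw [hz0]; exact h13
  | succ n ih =>
    have hzin : z n * x1 = q⁻¹ • (x1 * z n) := by
      rw [ih, smul_smul, inv_mul_cancel₀ hq, one_smul]
    have hsq : x1 ^ 2 * z n = (q * q) • (z n * (x1 * x1)) := by
      rw [pow_two, mul_assoc, ih, mul_smul_comm, ← mul_assoc, ih, smul_mul_assoc,
        smul_smul, mul_assoc]
    have hL2 : x1 * (z n * x2) = q • (z n * (x1 * x2)) := by
      rw [← mul_assoc, ih, smul_mul_assoc, mul_assoc]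
    have hR1 : x2 * z n * x1 =
        q⁻¹ • (x1 * (x2 * z n)) - (q⁻¹ * (2⁻¹ * (q * q))) • (z n * (x1 * x1)) := by
      rw [mul_assoc, hzin, mul_smul_comm, ← mul_assoc, hx21, sub_mul, smul_mul_assoc, hsq,
        smul_sub, smul_smul, smul_smul, mul_assoc x1]
      module
    have hR2 : z n * x2 * x1 = z n * (x1 * x2) - (2⁻¹ : k) • (z n * (x1 * x1)) := by
      rw [mul_assoc, hx21, mul_sub, mul_smul_comm, pow_two]
    rw [hz, mul_sub, mul_smul_comm, hL2, sub_mul, smul_mul_assoc, hR1, hR2, smul_sub]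
    match_scalars <;> field_simp <;> ring
end

section
/- Let k be a field, q ∈ k^×, and let A be an associative k-algebra containing elements x_1, x_2, x_3 satisfying x_1·x_3 = q·x_3·x_1, x_2·x_21 − x_21·x_2 − x_1·x_21 = 0 where x_21 := x_2·x_1 + x_1·x_2, and x_21·x_3 = q^2·x_3·x_21. Define recursively z_0 := x_3 and z_{n+1} := x_2·z_n − (−1)^n·q·z_n·x_2. Then for every natural number n, x_1·z_n = (−1)^n·q·z_n·x_1 and x_21·z_n = q^2·z_n·x_21. -/
/-!
Induction on `n`, with `c = (-1)^n q`. Writing `w = x₂x₁ + x₁x₂`, one has `x₁x₂ = w - x₂x₁`, so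
`x₁` passes through `z_{n+1} = x₂z_n - c z_nx₂` picking up `-c` once `c² = q²` is used to cancel
the two `z_n w` terms; and `w x₂ = x₂w - x₁w` lets `w` pass through `z_{n+1}` with the same
factor `q²` it has on `z_n`.
-/

section

variable {R A : Type*} [CommRing R] [Ring A] [Algebra R A]

def braidedAd (c : R) (a y : A) : A := a * y - c • (y * a)

theorem mul_braidedAd_eq_neg_smul {c : R} {x1 x2 y : A} (h1 : x1 * y = c • (y * x1))
    (h21 : (x2 * x1 + x1 * x2) * y = c ^ 2 • (y * (x2 * x1 + x1 * x2))) :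
    x1 * braidedAd c x2 y = (-c) • (braidedAd c x2 y * x1) := by
  have hx1x2y : x1 * x2 * y = c ^ 2 • (y * (x2 * x1 + x1 * x2)) - c • (x2 * y * x1) :=
    calc x1 * x2 * y = (x2 * x1 + x1 * x2) * y - x2 * (x1 * y) := by noncomm_ring
      _ = _ := by rw [h21, h1, mul_smul_comm, mul_assoc]
  have hx1yx2 : x1 * y * x2 = c • (y * (x2 * x1 + x1 * x2)) - c • (y * x2 * x1) :=
    calc x1 * y * x2 = c • (y * (x2 * x1 + x1 * x2) - y * x2 * x1) := by
          rw [h1, smul_mul_assoc]; noncomm_ring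
      _ = _ := smul_sub _ _ _
  simp only [braidedAd, mul_sub, sub_mul, mul_smul_comm, smul_mul_assoc, ← mul_assoc,
    hx1x2y, hx1yx2]
  module

theorem mul_braidedAd_eq_smul {c d : R} {x1 x2 w y : A} (hw : x2 * w - w * x2 = x1 * w)
    (h1 : x1 * y = c • (y * x1)) (hwy : w * y = d • (y * w)) :
    w * braidedAd c x2 y = d • (braidedAd c x2 y * w) := by
  have hwx2 : w * x2 = x2 * w - x1 * w := by rw [← hw]; abel
  have hwx2y : w * x2 * y = d • (x2 * y * w) - (c * d) • (y * x1 * w) :=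
    calc w * x2 * y = x2 * (w * y) - x1 * (w * y) := by
          rw [hwx2, sub_mul, mul_assoc, mul_assoc]
      _ = d • (x2 * y * w) - d • (x1 * y * w) := by
          rw [hwy, mul_smul_comm, mul_smul_comm, mul_assoc, mul_assoc]
      _ = _ := by rw [h1, smul_mul_assoc, smul_smul, mul_comm d, mul_assoc]
  have hwyx2 : w * y * x2 = d • (y * x2 * w) - d • (y * x1 * w) :=
    calc w * y * x2 = d • (y * (w * x2)) := by rw [hwy, smul_mul_assoc, mul_assoc]
      _ = _ := by rw [hwx2, ← smul_sub, mul_sub, mul_assoc, mul_assoc]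
  simp only [braidedAd, mul_sub, sub_mul, mul_smul_comm, smul_mul_assoc, ← mul_assoc,
    hwx2y, hwyx2]
  module

end

theorem stmt_9_general (k : Type*) [Field k] (q : k)
    (A : Type*) [Ring A] [Algebra k A] (x1 x2 x3 : A)
    (h13 : x1 * x3 = q • (x3 * x1))
    (h21 : x2 * (x2 * x1 + x1 * x2) - (x2 * x1 + x1 * x2) * x2
        - x1 * (x2 * x1 + x1 * x2) = 0)
    (h213 : (x2 * x1 + x1 * x2) * x3 = (q ^ 2) • (x3 * (x2 * x1 + x1 * x2)))
    (z : ℕ → A) (hz0 : z 0 = x3)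
    (hz : ∀ n : ℕ, z (n + 1) = x2 * z n - ((-1 : k) ^ n * q) • (z n * x2)) :
    ∀ n : ℕ, x1 * z n = ((-1 : k) ^ n * q) • (z n * x1) ∧
      (x2 * x1 + x1 * x2) * z n = (q ^ 2) • (z n * (x2 * x1 + x1 * x2)) := by
  intro n
  induction n with
  | zero => simpa only [hz0, pow_zero, one_mul] using ⟨h13, h213⟩
  | succ n ih =>
    obtain ⟨h1, hw⟩ := ih
    have hsq : ((-1 : k) ^ n * q) ^ 2 = q ^ 2 := by
      rw [mul_pow, ← pow_mul, pow_mul', neg_one_sq, one_pow, one_mul]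
    have hz' : z (n + 1) = braidedAd ((-1 : k) ^ n * q) x2 (z n) := hz n
    rw [hz', pow_succ, mul_neg_one, neg_mul]
    exact ⟨mul_braidedAd_eq_neg_smul h1 (hsq ▸ hw),
      mul_braidedAd_eq_smul (sub_eq_zero.mp h21) h1 hw⟩

theorem stmt_9 (k : Type*) [Field k] (q : k) (hq : q ≠ 0)
    (A : Type*) [Ring A] [Algebra k A] (x1 x2 x3 : A)
    (h13 : x1 * x3 = q • (x3 * x1))
    (h21 : x2 * (x2 * x1 + x1 * x2) - (x2 * x1 + x1 * x2) * x2
        - x1 * (x2 * x1 + x1 * x2) = 0)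
    (h213 : (x2 * x1 + x1 * x2) * x3 = (q ^ 2) • (x3 * (x2 * x1 + x1 * x2)))
    (z : ℕ → A) (hz0 : z 0 = x3)
    (hz : ∀ n : ℕ, z (n + 1) = x2 * z n - ((-1 : k) ^ n * q) • (z n * x2)) :
    ∀ n : ℕ, x1 * z n = ((-1 : k) ^ n * q) • (z n * x1) ∧
      (x2 * x1 + x1 * x2) * z n = (q ^ 2) • (z n * (x2 * x1 + x1 * x2)) :=
  stmt_9_general k q A x1 x2 x3 h13 h21 h213 z hz0 hz
end
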